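/- Let τ : ℝ → ℂ be measurable and R-slowly oscillating. Then there exist a constant b ∈ ℂ and a bounded continuous function g : ℝ → ℂ such that τ(x) = b + ∫₀ˣ g(y) dy + o(1) as x → ∞. -/
import Mathlib


open MeasureTheory Filter Complex Set

noncomputable section

/-- `τ` is R-slowly oscillating: with `Ψ(δ) = limsup_{x→∞} sup_{h∈(0,δ]} |τ(x+h) − τ(x)|`,
one has `limsup_{δ→0⁺} Ψ(δ)/δ < ∞`; unpacked into quantifiers, there are `C` and `δ₀ > 0`
such that for all `0 < δ ≤ δ₀`, `Ψ(δ) ≤ C·δ`. -/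
def RSlowlyOscillating (τ : ℝ → ℂ) : Prop :=
  ∃ C : ℝ, ∃ δ₀ > (0 : ℝ), ∀ δ : ℝ, 0 < δ → δ ≤ δ₀ → ∀ ε > (0:ℝ),
    ∀ᶠ x in atTop, ∀ h ∈ Ioc (0 : ℝ) δ, ‖τ (x + h) - τ x‖ ≤ C * δ + ε

namespace RSOAux

variable (τ : ℝ → ℂ) (C₁ : ℝ) (Z : ℕ → ℝ) (δ : ℕ → ℝ)

open Classical in
/-- Index of the current scale at position `x`. -/
def NN (x : ℝ) : ℕ := Nat.findGreatest (fun m => Z m ≤ x) ⌈x⌉₊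

/-- Nodes of the partition. -/
def tnode : ℕ → ℝ
  | 0 => Z 0
  | k + 1 => tnode k + δ (NN Z (tnode k))

/-- Step sizes. -/
def snode (k : ℕ) : ℝ := δ (NN Z (tnode Z δ k))

lemma tnode_succ (k : ℕ) : tnode Z δ (k + 1) = tnode Z δ k + snode Z δ k := rfl

lemma tnode_strictMono (h1 : ∀ n, 0 < δ n) : StrictMono (tnode Z δ) := by
  apply strictMono_nat_of_lt_succ
  intro k
  rw [tnode_succ]
  have hs : 0 < snode Z δ k := h1 _
  linarith

lemma Z0_le_tnode (h1 : ∀ n, 0 < δ n) (k : ℕ) : Z 0 ≤ tnode Z δ k := by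
  have : tnode Z δ 0 ≤ tnode Z δ k := (tnode_strictMono Z δ h1).monotone (Nat.zero_le k)
  simpa [tnode] using this

lemma Z_NN_le {x : ℝ} (hx : Z 0 ≤ x) : Z (NN Z x) ≤ x := by
  classical
  unfold NN
  exact Nat.findGreatest_spec (P := fun m => Z m ≤ x) (Nat.zero_le _) hx

lemma le_NN (hZ : ∀ n : ℕ, (n : ℝ) ≤ Z n) {m : ℕ} {x : ℝ} (h : Z m ≤ x) : m ≤ NN Z x := by
  classical
  apply Nat.le_findGreatest ?_ h
  have hmx : (m : ℝ) ≤ x := (hZ m).trans h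
  calc m = ⌈(m : ℝ)⌉₊ := by simp
    _ ≤ ⌈x⌉₊ := Nat.ceil_mono hmx

lemma NN_le_ceil (x : ℝ) : NN Z x ≤ ⌈x⌉₊ := Nat.findGreatest_le _

lemma tnode_tendsto (h1 : ∀ n, 0 < δ n) (hanti : Antitone δ) :
    Tendsto (tnode Z δ) atTop atTop := by
  rcases tendsto_of_monotone (tnode_strictMono Z δ h1).monotone with h | ⟨l, hl⟩
  · exact h
  · exfalso
    have hle : ∀ k, tnode Z δ k ≤ l := (tnode_strictMono Z δ h1).monotone.ge_of_tendsto hl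
    set L := ⌈l⌉₊ with hL
    have hstep : ∀ k, δ L ≤ snode Z δ k := by
      intro k
      apply hanti
      exact (NN_le_ceil Z _).trans (Nat.ceil_mono (hle k))
    have hlow : ∀ k : ℕ, Z 0 + k * δ L ≤ tnode Z δ k := by
      intro k
      induction k with
      | zero => simp [tnode]
      | succ k ih =>
        rw [tnode_succ]
        push_cast
        have := hstep k
        linarith
    obtain ⟨k, hk⟩ := exists_nat_gt ((l - Z 0) / δ L)
    have hδL := h1 L
    have h2 := hle k
    have h3 := hlow k
    rw [div_lt_iff₀ hδL] at hk
    linarith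

lemma NN_tnode_tendsto (h1 : ∀ n, 0 < δ n) (hanti : Antitone δ)
    (hZ : ∀ n : ℕ, (n : ℝ) ≤ Z n) :
    Tendsto (fun k => NN Z (tnode Z δ k)) atTop atTop := by
  rw [tendsto_atTop_atTop]
  intro m
  obtain ⟨K, hK⟩ := eventually_atTop.1 ((tnode_tendsto Z δ h1 hanti).eventually_ge_atTop (Z m))
  exact ⟨K, fun k hk => le_NN Z hZ (hK k hk)⟩

lemma snode_pos (h1 : ∀ n, 0 < δ n) (k : ℕ) : 0 < snode Z δ k := h1 _

lemma snode_tendsto (h1 : ∀ n, 0 < δ n) (h2 : ∀ n, δ n ≤ 1 / ((n : ℝ) + 1))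
    (hanti : Antitone δ) (hZ : ∀ n : ℕ, (n : ℝ) ≤ Z n) :
    Tendsto (snode Z δ) atTop (nhds 0) := by
  have h0 : Tendsto (fun k => 1 / ((NN Z (tnode Z δ k) : ℝ) + 1)) atTop (nhds 0) :=
    tendsto_one_div_add_atTop_nhds_zero_nat.comp (NN_tnode_tendsto Z δ h1 hanti hZ)
  exact tendsto_of_tendsto_of_tendsto_of_le_of_le tendsto_const_nhds h0
    (fun k => (h1 _).le) (fun k => h2 _)

/-- Heights of the tent functions. -/
def mm (k : ℕ) : ℂ := (6 / snode Z δ k : ℝ) • (τ (tnode Z δ (k + 1)) - τ (tnode Z δ k))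

lemma norm_tau_diff (h1 : ∀ n, 0 < δ n)
    (hprop : ∀ n, ∀ x, Z n ≤ x → ∀ h ∈ Ioc (0:ℝ) (δ n), ‖τ (x + h) - τ x‖ ≤ C₁ * δ n)
    (k : ℕ) : ‖τ (tnode Z δ (k + 1)) - τ (tnode Z δ k)‖ ≤ C₁ * snode Z δ k := by
  have hbase : Z (NN Z (tnode Z δ k)) ≤ tnode Z δ k := Z_NN_le Z (Z0_le_tnode Z δ h1 k)
  have := hprop (NN Z (tnode Z δ k)) (tnode Z δ k) hbase (snode Z δ k)
    ⟨snode_pos Z δ h1 k, le_refl _⟩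
  rw [tnode_succ]
  exact this

lemma norm_mm (h1 : ∀ n, 0 < δ n)
    (hprop : ∀ n, ∀ x, Z n ≤ x → ∀ h ∈ Ioc (0:ℝ) (δ n), ‖τ (x + h) - τ x‖ ≤ C₁ * δ n)
    (k : ℕ) : ‖mm τ Z δ k‖ ≤ 6 * C₁ := by
  have hs := snode_pos Z δ h1 k
  rw [mm, norm_smul, Real.norm_eq_abs, abs_of_pos (by positivity)]
  calc 6 / snode Z δ k * ‖τ (tnode Z δ (k + 1)) - τ (tnode Z δ k)‖
      ≤ 6 / snode Z δ k * (C₁ * snode Z δ k) := by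
        apply mul_le_mul_of_nonneg_left (norm_tau_diff τ C₁ Z δ h1 hprop k) (by positivity)
    _ = 6 * C₁ := by field_simp

/-- The tent bump function with support `[0,1]` and integral `1/6`. -/
def φf (u : ℝ) : ℝ := max 0 (u - u ^ 2)

lemma φf_cont : Continuous φf := continuous_const.max (continuous_id.sub (continuous_pow 2))

lemma φf_zero {u : ℝ} (h : u ≤ 0 ∨ 1 ≤ u) : φf u = 0 := by
  apply max_eq_left
  rcases h with h | h <;> nlinarith

lemma φf_eq {u : ℝ} (h0 : 0 ≤ u) (h1' : u ≤ 1) : φf u = u - u ^ 2 := by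
  apply max_eq_right
  nlinarith

lemma abs_φf_le (u : ℝ) : |φf u| ≤ 1 := by
  have h0 : 0 ≤ φf u := le_max_left _ _
  have h1 : φf u ≤ 1 := by
    unfold φf
    apply max_le (by norm_num)
    nlinarith [sq_nonneg (u - 1/2)]
  rw [abs_le]
  exact ⟨by linarith, h1⟩

/-- The bounded continuous function `g`. -/
def gfun (x : ℝ) : ℂ := ∑ᶠ k, φf ((x - tnode Z δ k) / snode Z δ k) • mm τ Z δ k

lemma term_zero_left (h1 : ∀ n, 0 < δ n) {k : ℕ} {x : ℝ} (hx : x ≤ tnode Z δ k) :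
    φf ((x - tnode Z δ k) / snode Z δ k) = 0 :=
  φf_zero (Or.inl (div_nonpos_of_nonpos_of_nonneg (sub_nonpos.2 hx) (snode_pos Z δ h1 k).le))

lemma term_zero_right (h1 : ∀ n, 0 < δ n) {k : ℕ} {x : ℝ} (hx : tnode Z δ (k + 1) ≤ x) :
    φf ((x - tnode Z δ k) / snode Z δ k) = 0 := by
  apply φf_zero
  right
  rw [one_le_div (snode_pos Z δ h1 k)]
  rw [tnode_succ] at hx
  linarith

lemma gfun_eq_on (h1 : ∀ n, 0 < δ n) (k : ℕ) {x : ℝ}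
    (hx1 : tnode Z δ k ≤ x) (hx2 : x ≤ tnode Z δ (k + 1)) :
    gfun τ Z δ x = φf ((x - tnode Z δ k) / snode Z δ k) • mm τ Z δ k := by
  apply finsum_eq_single
  intro j hj
  rcases lt_or_gt_of_ne hj with hlt | hgt
  · -- j < k
    have : tnode Z δ (j + 1) ≤ x :=
      le_trans ((tnode_strictMono Z δ h1).monotone (Nat.succ_le_of_lt hlt)) hx1
    rw [term_zero_right Z δ h1 this, zero_smul]
  · -- k < j
    have : x ≤ tnode Z δ j :=
      le_trans hx2 ((tnode_strictMono Z δ h1).monotone (Nat.succ_le_of_lt hgt))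
    rw [term_zero_left Z δ h1 this, zero_smul]

lemma gfun_eq_zero (h1 : ∀ n, 0 < δ n) {x : ℝ} (hx : x ≤ tnode Z δ 0) :
    gfun τ Z δ x = 0 := by
  apply finsum_eq_zero_of_forall_eq_zero
  intro k
  have : x ≤ tnode Z δ k := hx.trans ((tnode_strictMono Z δ h1).monotone (Nat.zero_le k))
  rw [term_zero_left Z δ h1 this, zero_smul]

lemma gfun_cont (h1 : ∀ n, 0 < δ n) (hanti : Antitone δ) : Continuous (gfun τ Z δ) := by
  apply continuous_finsum
  · intro k
    exact (φf_cont.comp ((continuous_id.sub continuous_const).div_const _)).smul continuous_const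
  · intro x₀
    refine ⟨Iio (x₀ + 1), Iio_mem_nhds (by linarith), ?_⟩
    obtain ⟨K, hK⟩ := eventually_atTop.1
      ((tnode_tendsto Z δ h1 hanti).eventually_ge_atTop (x₀ + 1))
    apply Set.Finite.subset (Set.finite_lt_nat K)
    intro k hk
    obtain ⟨y, hy1, hy2⟩ := hk
    by_contra hcon
    rw [Set.mem_setOf_eq, not_lt] at hcon
    have hKk : x₀ + 1 ≤ tnode Z δ k := hK k hcon
    have hy3 : y < x₀ + 1 := hy2
    have hyk : y ≤ tnode Z δ k := by linarith
    apply hy1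
    show φf ((y - tnode Z δ k) / snode Z δ k) • mm τ Z δ k = 0
    rw [term_zero_left Z δ h1 hyk, zero_smul]

lemma exists_interval (h1 : ∀ n, 0 < δ n) (hanti : Antitone δ) {x : ℝ}
    (hx : tnode Z δ 0 ≤ x) :
    ∃ K, tnode Z δ K ≤ x ∧ x < tnode Z δ (K + 1) ∧ ∀ j, tnode Z δ j ≤ x → j ≤ K := by
  classical
  obtain ⟨B, hB⟩ := eventually_atTop.1 ((tnode_tendsto Z δ h1 hanti).eventually_gt_atTop x)
  set K := Nat.findGreatest (fun k => tnode Z δ k ≤ x) B with hKdef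
  have hmax : ∀ j, tnode Z δ j ≤ x → j ≤ K := by
    intro j hj
    have hjB : j ≤ B := by
      by_contra hc
      push_neg at hc
      exact absurd hj (not_le.2 (hB j hc.le))
    exact Nat.le_findGreatest hjB hj
  have hK1 : tnode Z δ K ≤ x :=
    Nat.findGreatest_spec (P := fun k => tnode Z δ k ≤ x) (Nat.zero_le B) hx
  refine ⟨K, hK1, ?_, hmax⟩
  by_contra hc
  push_neg at hc
  have := hmax (K + 1) hc
  omega

lemma gfun_norm_le (h1 : ∀ n, 0 < δ n) (hanti : Antitone δ) (hC : 1 ≤ C₁)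
    (hprop : ∀ n, ∀ x, Z n ≤ x → ∀ h ∈ Ioc (0:ℝ) (δ n), ‖τ (x + h) - τ x‖ ≤ C₁ * δ n)
    (x : ℝ) : ‖gfun τ Z δ x‖ ≤ 6 * C₁ := by
  by_cases hx : x ≤ tnode Z δ 0
  · rw [gfun_eq_zero τ Z δ h1 hx, norm_zero]; linarith
  · push_neg at hx
    obtain ⟨K, hK1, hK2, _⟩ := exists_interval Z δ h1 hanti hx.le
    rw [gfun_eq_on τ Z δ h1 K hK1 hK2.le, norm_smul, Real.norm_eq_abs]
    calc |φf ((x - tnode Z δ K) / snode Z δ K)| * ‖mm τ Z δ K‖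
        ≤ 1 * (6 * C₁) := by
          apply mul_le_mul (abs_φf_le _) (norm_mm τ C₁ Z δ h1 hprop K) (norm_nonneg _)
            zero_le_one
      _ = 6 * C₁ := one_mul _

lemma gfun_intervalIntegrable (h1 : ∀ n, 0 < δ n) (hanti : Antitone δ) (a b : ℝ) :
    IntervalIntegrable (gfun τ Z δ) volume a b :=
  (gfun_cont τ Z δ h1 hanti).intervalIntegrable a b

lemma integral_phi_piece (h1 : ∀ n, 0 < δ n) (k : ℕ) :
    ∫ x in tnode Z δ k..tnode Z δ (k + 1), φf ((x - tnode Z δ k) / snode Z δ k)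
      = snode Z δ k * (1 / 6) := by
  have hs := snode_pos Z δ h1 k
  have h₀ : (∫ x in tnode Z δ k..tnode Z δ (k + 1), φf ((x - tnode Z δ k) / snode Z δ k))
      = ∫ x in tnode Z δ k - tnode Z δ k..tnode Z δ (k+1) - tnode Z δ k,
          φf (x / snode Z δ k) :=
    intervalIntegral.integral_comp_sub_right (fun y => φf (y / snode Z δ k)) (tnode Z δ k)
  rw [h₀, sub_self, tnode_succ, add_sub_cancel_left]
  rw [intervalIntegral.integral_comp_div (fun y => φf y) hs.ne']
  rw [zero_div, div_self hs.ne']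
  have hint : (∫ y in (0:ℝ)..1, φf y) = 1 / 6 := by
    rw [intervalIntegral.integral_congr (g := fun y => y - y ^ 2) ?eqon]
    case eqon =>
      intro y hy
      rw [uIcc_of_le zero_le_one] at hy
      exact φf_eq hy.1 hy.2
    rw [intervalIntegral.integral_sub (Continuous.intervalIntegrable (by continuity) _ _)
      (Continuous.intervalIntegrable (by continuity) _ _)]
    have hid : (∫ y in (0:ℝ)..1, y) = 1 / 2 := by
      rw [integral_id]; norm_num
    have hpw : (∫ y in (0:ℝ)..1, y ^ 2) = 1 / 3 := by
      rw [integral_pow]; norm_num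
    rw [hid, hpw]; norm_num
  rw [hint, smul_eq_mul]

lemma piece_integral (h1 : ∀ n, 0 < δ n) (k : ℕ) :
    ∫ x in tnode Z δ k..tnode Z δ (k + 1), gfun τ Z δ x
      = τ (tnode Z δ (k + 1)) - τ (tnode Z δ k) := by
  have hle : tnode Z δ k ≤ tnode Z δ (k + 1) :=
    ((tnode_strictMono Z δ h1) (Nat.lt_succ_self k)).le
  have hs := snode_pos Z δ h1 k
  rw [intervalIntegral.integral_congr
    (g := fun x => φf ((x - tnode Z δ k) / snode Z δ k) • mm τ Z δ k) ?eqon]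
  case eqon =>
    intro x hx
    rw [uIcc_of_le hle] at hx
    exact gfun_eq_on τ Z δ h1 k hx.1 hx.2
  rw [intervalIntegral.integral_smul_const, integral_phi_piece Z δ h1 k, mm, smul_smul]
  have : snode Z δ k * (1 / 6) * (6 / snode Z δ k) = 1 := by field_simp
  rw [this, one_smul]

lemma integral_t0_tK (h1 : ∀ n, 0 < δ n) (hanti : Antitone δ) (K : ℕ) :
    ∫ x in (tnode Z δ 0)..tnode Z δ K, gfun τ Z δ x = τ (tnode Z δ K) - τ (tnode Z δ 0) := by
  rw [← intervalIntegral.sum_integral_adjacent_intervals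
    (fun k _ => gfun_intervalIntegrable τ Z δ h1 hanti _ _)]
  rw [Finset.sum_congr rfl (fun k _ => piece_integral τ Z δ h1 k)]
  exact Finset.sum_range_sub (fun k => τ (tnode Z δ k)) K

theorem aux_main (h1 : ∀ n, 0 < δ n) (h2 : ∀ n, δ n ≤ 1 / ((n : ℝ) + 1))
    (hanti : Antitone δ) (hZ : ∀ n : ℕ, (n : ℝ) ≤ Z n) (hC : 1 ≤ C₁)
    (hprop : ∀ n, ∀ x, Z n ≤ x → ∀ h ∈ Ioc (0:ℝ) (δ n), ‖τ (x + h) - τ x‖ ≤ C₁ * δ n) :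
    ∃ (b : ℂ) (g : ℝ → ℂ), Continuous g ∧ (∃ M : ℝ, ∀ x : ℝ, ‖g x‖ ≤ M) ∧
      Tendsto (fun x : ℝ => τ x - b - ∫ y in (0:ℝ)..x, g y) atTop (nhds 0) := by
  refine ⟨τ (tnode Z δ 0), gfun τ Z δ, gfun_cont τ Z δ h1 hanti,
    ⟨6 * C₁, gfun_norm_le τ C₁ Z δ h1 hanti hC hprop⟩, ?_⟩
  rw [NormedAddCommGroup.tendsto_nhds_zero]
  intro ε hε
  have hs0 : Tendsto (fun k => 7 * C₁ * snode Z δ k) atTop (nhds 0) := by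
    have := (snode_tendsto Z δ h1 h2 hanti hZ).const_mul (7 * C₁)
    simpa using this
  obtain ⟨K₀, hK₀⟩ := eventually_atTop.1 (hs0.eventually (gt_mem_nhds hε))
  filter_upwards [eventually_ge_atTop (tnode Z δ K₀)] with x hx
  have hx0 : tnode Z δ 0 ≤ x :=
    le_trans ((tnode_strictMono Z δ h1).monotone (Nat.zero_le K₀)) hx
  obtain ⟨K, hK1, hK2, hK3⟩ := exists_interval Z δ h1 hanti hx0
  have hKK₀ : K₀ ≤ K := hK3 K₀ hx
  have hsK := snode_pos Z δ h1 K
  -- decompose the integral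
  have eA : (∫ y in (0:ℝ)..tnode Z δ 0, gfun τ Z δ y) + ∫ y in (tnode Z δ 0)..x, gfun τ Z δ y
      = ∫ y in (0:ℝ)..x, gfun τ Z δ y :=
    intervalIntegral.integral_add_adjacent_intervals
      (gfun_intervalIntegrable τ Z δ h1 hanti _ _) (gfun_intervalIntegrable τ Z δ h1 hanti _ _)
  have eB : (∫ y in (tnode Z δ 0)..tnode Z δ K, gfun τ Z δ y)
        + ∫ y in tnode Z δ K..x, gfun τ Z δ y
      = ∫ y in (tnode Z δ 0)..x, gfun τ Z δ y :=
    intervalIntegral.integral_add_adjacent_intervals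
      (gfun_intervalIntegrable τ Z δ h1 hanti _ _) (gfun_intervalIntegrable τ Z δ h1 hanti _ _)
  have e2 : (∫ y in (0:ℝ)..tnode Z δ 0, gfun τ Z δ y) = 0 := by
    rw [intervalIntegral.integral_congr (g := fun _ => (0:ℂ)) ?eqz, intervalIntegral.integral_zero]
    case eqz =>
      intro y hy
      have h00 : (0:ℝ) ≤ tnode Z δ 0 := le_trans (by exact_mod_cast hZ 0) (le_refl _)
      rw [uIcc_of_le h00] at hy
      exact gfun_eq_zero τ Z δ h1 hy.2
  have e3 : (∫ y in (tnode Z δ 0)..tnode Z δ K, gfun τ Z δ y)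
      = τ (tnode Z δ K) - τ (tnode Z δ 0) := integral_t0_tK τ Z δ h1 hanti K
  have e4 : ‖∫ y in tnode Z δ K..x, gfun τ Z δ y‖ ≤ 6 * C₁ * snode Z δ K := by
    have hb := intervalIntegral.norm_integral_le_of_norm_le_const
      (C := 6 * C₁) (f := gfun τ Z δ) (a := tnode Z δ K) (b := x)
      (fun y _ => gfun_norm_le τ C₁ Z δ h1 hanti hC hprop y)
    have habs : |x - tnode Z δ K| ≤ snode Z δ K := by
      rw [_root_.abs_of_nonneg (by linarith)]
      rw [tnode_succ] at hK2
      linarith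
    calc ‖∫ y in tnode Z δ K..x, gfun τ Z δ y‖ ≤ 6 * C₁ * |x - tnode Z δ K| := hb
      _ ≤ 6 * C₁ * snode Z δ K := by
          apply mul_le_mul_of_nonneg_left habs (by linarith)
  have e5 : ‖τ x - τ (tnode Z δ K)‖ ≤ C₁ * snode Z δ K := by
    rcases eq_or_lt_of_le hK1 with he | hlt
    · rw [← he, sub_self, norm_zero]
      nlinarith
    · have hbase : Z (NN Z (tnode Z δ K)) ≤ tnode Z δ K :=
        Z_NN_le Z (Z0_le_tnode Z δ h1 K)
      have hh : x - tnode Z δ K ∈ Ioc (0:ℝ) (snode Z δ K) := by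
        constructor
        · linarith
        · rw [tnode_succ] at hK2; linarith
      have := hprop (NN Z (tnode Z δ K)) (tnode Z δ K) hbase (x - tnode Z δ K) hh
      rwa [add_sub_cancel] at this
  have key : τ x - τ (tnode Z δ 0) - ∫ y in (0:ℝ)..x, gfun τ Z δ y
      = (τ x - τ (tnode Z δ K)) - ∫ y in tnode Z δ K..x, gfun τ Z δ y := by
    rw [← eA, e2, zero_add, ← eB, e3]
    ring
  rw [key]
  calc ‖(τ x - τ (tnode Z δ K)) - ∫ y in tnode Z δ K..x, gfun τ Z δ y‖
      ≤ ‖τ x - τ (tnode Z δ K)‖ + ‖∫ y in tnode Z δ K..x, gfun τ Z δ y‖ := norm_sub_le _ _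
    _ ≤ C₁ * snode Z δ K + 6 * C₁ * snode Z δ K := add_le_add e5 e4
    _ = 7 * C₁ * snode Z δ K := by ring
    _ < ε := hK₀ K hKK₀

end RSOAux

/-- Proposition 5.1: a measurable R-slowly oscillating function is, up to `o(1)`, a constant
plus the integral of a bounded continuous function. -/
theorem r_slowly_oscillating_representation
    (τ : ℝ → ℂ) (hmeas : Measurable τ) (hR : RSlowlyOscillating τ) :
    ∃ (b : ℂ) (g : ℝ → ℂ), Continuous g ∧ (∃ M : ℝ, ∀ x : ℝ, ‖g x‖ ≤ M) ∧
      Tendsto (fun x : ℝ => τ x - b - ∫ y in (0:ℝ)..x, g y) atTop (nhds 0) := by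
  obtain ⟨C, δ₀, hδ₀, H⟩ := hR
  set C₁ : ℝ := max C 0 + 1 with hC₁def
  have hC : 1 ≤ C₁ := by
    have := le_max_right C 0
    simp only [hC₁def]
    linarith
  set δf : ℕ → ℝ := fun n => min δ₀ (1 / ((n : ℝ) + 1)) with hδfdef
  have hδpos : ∀ n, 0 < δf n := fun n => lt_min hδ₀ (by positivity)
  have hδle : ∀ n, δf n ≤ 1 / ((n : ℝ) + 1) := fun n => min_le_right _ _
  have hanti : Antitone δf := by
    intro a b hab
    apply min_le_min le_rfl
    apply one_div_le_one_div_of_le (by positivity)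
    have : (a : ℝ) ≤ b := by exact_mod_cast hab
    linarith
  have hev : ∀ n, ∀ᶠ x in atTop, ∀ h ∈ Ioc (0:ℝ) (δf n), ‖τ (x + h) - τ x‖ ≤ C₁ * δf n := by
    intro n
    filter_upwards [H (δf n) (hδpos n) (min_le_left _ _) (δf n) (hδpos n)] with x hx h hh
    have hb := hx h hh
    have h1 : C ≤ max C 0 := le_max_left C 0
    have h2 := (hδpos n).le
    calc ‖τ (x + h) - τ x‖ ≤ C * δf n + δf n := hb
      _ ≤ max C 0 * δf n + δf n := by nlinarith
      _ = C₁ * δf n := by rw [hC₁def]; ring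
  choose z hz using fun n => eventually_atTop.1 (hev n)
  have := RSOAux.aux_main τ C₁ (fun n => max (z n) n) δf hδpos hδle hanti
    (fun n => le_max_right _ _) hC
    (fun n x hx => hz n x (le_trans (le_max_left _ _) hx))
  exact this
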